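/- A function γ' of bounded variation on the circle satisfies that both one-sided limits of ‖γ'‖ are nonzero at every point if and only if the essential infimum of ‖γ'(s)‖ over the circle is strictly positive. -/

import Mathlib

open MeasureTheory Set Filter Topology

/-!
Write `f = ‖γ'‖`. Having bounded variation on every bounded interval, `f` has one-sided limits
everywhere; as `f ≥ 0` and no one-sided limit is `0`, they are positive, so each point has a
punctured neighbourhood on which `f` is bounded below by a positive constant. Compactness of
`[0, 1]` makes the constant uniform off finitely many points, a null set. Conversely, if
`f > c > 0` a.e. on `[0, 1]`, then by periodicity a.e. on `ℝ`, so `f > c` at points arbitrarily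
close to any `s` on either side.
-/

section Periodic

variable {E : Type*} [PseudoEMetricSpace E] {f : ℝ → E} {T : ℝ}

theorem Function.Periodic.eVariationOn_Icc_add (hf : Function.Periodic f T) (a b : ℝ) :
    eVariationOn f (Icc (a + T) (b + T)) = eVariationOn f (Icc a b) := by
  have h := eVariationOn.comp_eq_of_monotoneOn f (t := Icc a b) (· + T)
    (fun x _ y _ hxy => by simpa using hxy)
  rw [image_add_const_Icc] at h
  rw [← h]
  exact congrArg (eVariationOn · _) (funext hf)

theorem Function.Periodic.eVariationOn_Icc_zero_nat_mul (hf : Function.Periodic f T)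
    (hT : 0 ≤ T) (n : ℕ) :
    eVariationOn f (Icc 0 (n * T)) = n * eVariationOn f (Icc 0 T) := by
  induction n with
  | zero => simp [eVariationOn.subsingleton]
  | succ n ih =>
    have hnT : 0 ≤ (n : ℝ) * T := by positivity
    have hsplit := eVariationOn.Icc_add_Icc f (c := (n + 1 : ℕ) * T) hnT
      (by push_cast; linarith) (mem_univ _)
    have hlast := (hf.nat_mul n).eVariationOn_Icc_add 0 T
    rw [zero_add, add_comm T] at hlast
    simp only [univ_inter] at hsplit
    rw [← hsplit, ih, Nat.cast_succ, add_one_mul, hlast]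
    push_cast
    ring

theorem Function.Periodic.locallyBoundedVariationOn (hf : Function.Periodic f T) (hT : 0 < T)
    (h : BoundedVariationOn f (Icc 0 T)) : LocallyBoundedVariationOn f univ := by
  intro a b _ _
  obtain ⟨n, hn⟩ := exists_nat_ge ((|a| + |b|) / T)
  rw [div_le_iff₀ hT] at hn
  -- `[-nT, nT]` is a translate of `[0, 2nT]` by the period `nT`
  have hsym := (hf.nat_mul n).eVariationOn_Icc_add (-(n * T)) (n * T)
  rw [neg_add_cancel, ← two_mul, ← mul_assoc, ← Nat.cast_ofNat, ← Nat.cast_mul,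
    hf.eVariationOn_Icc_zero_nat_mul hT.le] at hsym
  have hsub : univ ∩ Icc a b ⊆ Icc (-(n * T)) (n * T) := by
    rw [univ_inter]
    exact Icc_subset_Icc (by linarith [neg_abs_le a, abs_nonneg b])
      (by linarith [le_abs_self b, abs_nonneg a])
  exact ne_top_of_le_ne_top (hsym ▸ ENNReal.mul_ne_top (ENNReal.natCast_ne_top _) h)
    (eVariationOn.mono f hsub)

end Periodic

theorem Function.Periodic.ae_of_ae_restrict_Icc {p : ℝ → Prop} {T : ℝ}
    (hp : Function.Periodic p T) (hT : 0 < T) (h : ∀ᵐ x ∂volume.restrict (Icc 0 T), p x) :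
    ∀ᵐ x, p x := by
  rw [ae_restrict_iff' measurableSet_Icc] at h
  have htranslate : ∀ n : ℤ, ∀ᵐ x, x - n • T ∈ Icc 0 T → p (x - n • T) := fun n =>
    (measurePreserving_sub_right volume (n • T)).quasiMeasurePreserving.ae h
  filter_upwards [ae_all_iff.2 htranslate] with x hx
  rw [← hp.sub_zsmul_eq (toIcoDiv hT 0 x)]
  refine hx _ (Ico_subset_Icc_self ?_)
  simpa [self_sub_toIcoDiv_zsmul] using toIcoMod_mem_Ico hT 0 x

section OneSidedLimits

variable {E : Type*} [PseudoEMetricSpace E] [CompleteSpace E] {f : ℝ → E}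

theorem LocallyBoundedVariationOn.exists_tendsto_nhdsGT (hf : LocallyBoundedVariationOn f univ)
    (x : ℝ) : ∃ l, Tendsto f (𝓝[>] x) (𝓝 l) := by
  have hIcc : Icc (x - 1) (x + 1) ∈ 𝓝[>] x :=
    mem_nhdsWithin_of_mem_nhds (Icc_mem_nhds (by linarith) (by linarith))
  simpa only [univ_inter, nhdsWithin_inter_of_mem hIcc] using
    (hf (x - 1) (x + 1) trivial trivial).exists_tendsto_right x

theorem LocallyBoundedVariationOn.exists_tendsto_nhdsLT (hf : LocallyBoundedVariationOn f univ)
    (x : ℝ) : ∃ l, Tendsto f (𝓝[<] x) (𝓝 l) := by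
  have hIcc : Icc (x - 1) (x + 1) ∈ 𝓝[<] x :=
    mem_nhdsWithin_of_mem_nhds (Icc_mem_nhds (by linarith) (by linarith))
  simpa only [univ_inter, nhdsWithin_inter_of_mem hIcc] using
    (hf (x - 1) (x + 1) trivial trivial).exists_tendsto_left x

end OneSidedLimits

theorem exists_pos_eventually_lt_of_tendsto {α : Type*} {l : Filter α} [l.NeBot] {f : α → ℝ}
    (hf : ∀ x, 0 ≤ f x) (hlim : ∃ L, Tendsto f l (𝓝 L)) (h0 : ¬Tendsto f l (𝓝 0)) :
    ∃ c > 0, ∀ᶠ x in l, c < f x := by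
  obtain ⟨L, hL⟩ := hlim
  have hL0 : 0 < L := (ge_of_tendsto' hL hf).lt_of_ne fun h => h0 (h ▸ hL)
  exact ⟨L / 2, half_pos hL0, hL.eventually (lt_mem_nhds (half_lt_self hL0))⟩

theorem LocallyBoundedVariationOn.exists_pos_eventually_nhdsNE_lt {f : ℝ → ℝ}
    (hf : LocallyBoundedVariationOn f univ) (hf0 : ∀ x, 0 ≤ f x) {x : ℝ}
    (hright : ¬Tendsto f (𝓝[>] x) (𝓝 0)) (hleft : ¬Tendsto f (𝓝[<] x) (𝓝 0)) :
    ∃ c > 0, ∀ᶠ y in 𝓝[≠] x, c < f y := by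
  obtain ⟨c, hc, hcf⟩ :=
    exists_pos_eventually_lt_of_tendsto hf0 (hf.exists_tendsto_nhdsGT x) hright
  obtain ⟨d, hd, hdf⟩ :=
    exists_pos_eventually_lt_of_tendsto hf0 (hf.exists_tendsto_nhdsLT x) hleft
  refine ⟨min c d, lt_min hc hd, ?_⟩
  rw [← nhdsLT_sup_nhdsGT, eventually_sup]
  exact ⟨hdf.mono fun y hy => (min_le_right c d).trans_lt hy,
    hcf.mono fun y hy => (min_le_left c d).trans_lt hy⟩

theorem IsCompact.exists_pos_ae_lt {X : Type*} [TopologicalSpace X] [MeasurableSpace X]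
    {μ : Measure X} [NullSingletonClass μ] {K : Set X} (hK : IsCompact K) {f : X → ℝ}
    (h : ∀ x ∈ K, ∃ c > 0, ∀ᶠ y in 𝓝[≠] x, c < f y) :
    ∃ c > 0, ∀ᵐ y ∂μ, y ∈ K → c < f y := by
  refine hK.induction_on (p := fun K => ∃ c > 0, ∀ᵐ y ∂μ, y ∈ K → c < f y) ?_ ?_ ?_ ?_
  · exact ⟨1, one_pos, by simp⟩
  · rintro s t hst ⟨c, hc, hct⟩
    exact ⟨c, hc, hct.mono fun y hy hys => hy (hst hys)⟩
  · rintro s t ⟨c, hc, hcs⟩ ⟨d, hd, hdt⟩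
    refine ⟨min c d, lt_min hc hd, ?_⟩
    filter_upwards [hcs, hdt] with y hys hyt hy
    rcases hy with hy | hy
    · exact (min_le_left c d).trans_lt (hys hy)
    · exact (min_le_right c d).trans_lt (hyt hy)
  · intro x hx
    obtain ⟨c, hc, hcx⟩ := h x hx
    obtain ⟨U, hU, hUx⟩ := mem_nhdsWithin_iff_exists_mem_nhds_inter.1 hcx
    refine ⟨U, mem_nhdsWithin_of_mem_nhds hU, c, hc, ?_⟩
    filter_upwards [compl_mem_ae_iff.2 (measure_singleton x)] with y hy hyU
    exact hUx ⟨hyU, hy⟩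

theorem LocallyBoundedVariationOn.pos_essInf_of_not_tendsto_zero {f : ℝ → ℝ}
    (hf : LocallyBoundedVariationOn f univ) (hf0 : ∀ x, 0 ≤ f x) {a b : ℝ} (hab : a < b)
    (hright : ∀ x, ¬Tendsto f (𝓝[>] x) (𝓝 0))
    (hleft : ∀ x, ¬Tendsto f (𝓝[<] x) (𝓝 0)) :
    0 < essInf f (volume.restrict (Icc a b)) := by
  obtain ⟨c, hc, hcf⟩ := (isCompact_Icc (a := a) (b := b)).exists_pos_ae_lt (μ := volume)
    fun x _ => hf.exists_pos_eventually_nhdsNE_lt hf0 (hright x) (hleft x)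
  have hbdd : ∀ᵐ x ∂volume.restrict (Icc a b),
      f x ≤ f a + (eVariationOn f (Icc a b)).toReal := by
    have hBV : BoundedVariationOn f (Icc a b) := by simpa using hf a b trivial trivial
    filter_upwards [ae_restrict_mem measurableSet_Icc] with x hx
    linarith [hBV.sub_le hx (left_mem_Icc.2 hab.le)]
  have : (ae (volume.restrict (Icc a b))).NeBot := ae_restrict_neBot.2 (by simp [hab])
  refine hc.trans_le (le_essInf_of_ae_le c ?_ (isCoboundedUnder_ge_of_eventually_le _ hbdd))
  exact ((ae_restrict_iff' measurableSet_Icc).2 hcf).mono fun _ => le_of_lt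

section OpenPos

variable {X : Type*} [TopologicalSpace X] [LinearOrder X] [OrderTopology X] [DenselyOrdered X]
  [MeasurableSpace X] {μ : Measure X} [μ.IsOpenPosMeasure] {p : X → Prop}

theorem frequently_nhdsGT_of_ae [NoMaxOrder X] (h : ∀ᵐ t ∂μ, p t) (x : X) :
    ∃ᶠ t in 𝓝[>] x, p t :=
  (nhdsGT_basis x).frequently_iff.2 fun _ hb =>
    (Measure.dense_of_ae h).inter_open_nonempty _ isOpen_Ioo (nonempty_Ioo.2 hb)

theorem frequently_nhdsLT_of_ae [NoMinOrder X] (h : ∀ᵐ t ∂μ, p t) (x : X) :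
    ∃ᶠ t in 𝓝[<] x, p t :=
  (nhdsLT_basis x).frequently_iff.2 fun _ hb =>
    (Measure.dense_of_ae h).inter_open_nonempty _ isOpen_Ioo (nonempty_Ioo.2 hb)

end OpenPos

theorem not_tendsto_nhds_zero_of_frequently_lt {α : Type*} {l : Filter α} {f : α → ℝ}
    {c : ℝ} (hc : 0 < c) (h : ∃ᶠ x in l, c < f x) : ¬Tendsto f l (𝓝 0) :=
  not_tendsto_iff_exists_frequently_notMem.2
    ⟨Iio c, Iio_mem_nhds hc, h.mono fun _ hx => not_lt.2 hx.le⟩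

theorem Function.Periodic.not_tendsto_zero_of_pos_essInf {f : ℝ → ℝ} {T : ℝ}
    (hper : Function.Periodic f T) (hT : 0 < T) (hf0 : ∀ x, 0 ≤ f x)
    (h : 0 < essInf f (volume.restrict (Icc 0 T))) :
    (∀ x, ¬Tendsto f (𝓝[>] x) (𝓝 0)) ∧ (∀ x, ¬Tendsto f (𝓝[<] x) (𝓝 0)) := by
  obtain ⟨c, hc, hcess⟩ := exists_between h
  have hae : ∀ᵐ x, c < f x := (hper.comp (c < ·)).ae_of_ae_restrict_Icc hT
    (ae_lt_of_lt_essInf hcess (isBoundedUnder_of_eventually_ge (.of_forall hf0)))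
  exact ⟨fun x => not_tendsto_nhds_zero_of_frequently_lt hc (frequently_nhdsGT_of_ae hae x),
    fun x => not_tendsto_nhds_zero_of_frequently_lt hc (frequently_nhdsLT_of_ae hae x)⟩

/-- For a function `γ'` of bounded variation on the circle
(modeled as a 1-periodic function `ℝ → ℝ²` of finite variation on `[0,1]`),
the condition that at every point both one-sided limits of `‖γ'‖` are nonzero
(equivalently, `‖γ'‖` does not tend to `0` from either side) is equivalent to
the essential infimum of `‖γ'(s)‖` over the circle being strictly positive. -/
theorem stmt_0 (γ' : ℝ → EuclideanSpace ℝ (Fin 2))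
    (hper : Function.Periodic γ' 1)
    (hBV : eVariationOn γ' (Set.Icc 0 1) ≠ ⊤) :
    ((∀ s : ℝ, ¬ Tendsto (fun t => ‖γ' t‖) (nhdsWithin s (Set.Ioi s)) (nhds 0)) ∧
     (∀ s : ℝ, ¬ Tendsto (fun t => ‖γ' t‖) (nhdsWithin s (Set.Iio s)) (nhds 0))) ↔
    0 < essInf (fun s => ‖γ' s‖) (volume.restrict (Set.Icc (0:ℝ) 1)) := by
  have hBVloc : LocallyBoundedVariationOn (fun t => ‖γ' t‖) univ :=
    lipschitzWith_one_norm.comp_locallyBoundedVariationOn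
      (hper.locallyBoundedVariationOn one_pos hBV)
  have hnonneg : ∀ t, 0 ≤ ‖γ' t‖ := fun t => norm_nonneg _
  exact ⟨fun h => hBVloc.pos_essInf_of_not_tendsto_zero hnonneg zero_lt_one h.1 h.2,
    (hper.comp norm).not_tendsto_zero_of_pos_essInf one_pos hnonneg⟩
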